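/- Let $\mu_d > 0$, $\alpha \in (0,1]$, and let $(\widehat L_t)$ be a nondecreasing sequence of positive reals. Suppose $(\eta_t)$, $(\tau_t)$ satisfy: $\eta_2 = \frac{\mu_d}{4\widehat L_1^2}$, $\eta_3 = \frac{\mu_d}{4\widehat L_2^2}$, for $t \ge 3$: $\eta_{t+1} \ge \min\{\frac{t+1}{t}\eta_t, \frac{(1+\alpha(t-2)/2)\mu_d}{4\widehat L_t^2}\}$, and $\widehat L_{t} \ge \widehat L_{t-1}$. Then by induction, $\eta_t \ge \frac{(3 + \alpha(t-3))\mu_d}{12\widehat L_{t-1}^2}$ for all $t \ge 2$. -/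
import Mathlib


theorem stmt_10 (μ α : ℝ) (hμ : 0 < μ) (hα0 : 0 < α) (hα1 : α ≤ 1)
    (η Lhat : ℕ → ℝ) (hLpos : ∀ t, 0 < Lhat t) (hLmono : Monotone Lhat)
    (hη2 : η 2 = μ / (4 * (Lhat 1) ^ 2))
    (hη3 : η 3 = μ / (4 * (Lhat 2) ^ 2))
    (hrec : ∀ t : ℕ, 3 ≤ t →
      min (((t : ℝ) + 1) / (t : ℝ) * η t)
        ((1 + α * ((t : ℝ) - 2) / 2) * μ / (4 * (Lhat t) ^ 2)) ≤ η (t + 1)) :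
    ∀ t : ℕ, 2 ≤ t → (3 + α * ((t : ℝ) - 3)) * μ / (12 * (Lhat (t - 1)) ^ 2) ≤ η t := by
  have key : ∀ t : ℕ, 3 ≤ t →
      (3 + α * ((t : ℝ) - 3)) * μ / (12 * (Lhat (t - 1)) ^ 2) ≤ η t := by
    intro t ht
    induction t, ht using Nat.le_induction with
    | base =>
      have hL := hLpos 2
      rw [hη3]
      norm_num
      rw [div_le_div_iff₀ (by positivity) (by positivity)]
      ring_nf
      nlinarith [sq_nonneg (Lhat 2)]
    | succ t ht ih =>
      have hLt := hLpos t
      have hLt1 := hLpos (t - 1)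
      have hLm : Lhat (t - 1) ≤ Lhat t := hLmono (Nat.sub_le t 1)
      have hL2 : (Lhat (t - 1)) ^ 2 ≤ (Lhat t) ^ 2 := by nlinarith
      have ht3 : (3 : ℝ) ≤ (t : ℝ) := by exact_mod_cast ht
      have htpos : (0 : ℝ) < (t : ℝ) := by linarith
      refine le_trans ?_ (hrec t ht)
      rw [le_min_iff]
      simp only [Nat.add_sub_cancel]
      push_cast
      constructor
      · -- target ≤ (t+1)/t * η t
        have h1 : ((t : ℝ) + 1) / t * ((3 + α * ((t : ℝ) - 3)) * μ / (12 * (Lhat (t - 1)) ^ 2))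
            ≤ ((t : ℝ) + 1) / t * η t := by
          apply mul_le_mul_of_nonneg_left ih (by positivity)
        refine le_trans ?_ h1
        have hcoef : (t : ℝ) * (3 + α * ((t : ℝ) - 2)) ≤ ((t : ℝ) + 1) * (3 + α * ((t : ℝ) - 3)) := by
          nlinarith
        have hαt : (0 : ℝ) ≤ α * ((t : ℝ) - 3) := mul_nonneg hα0.le (by linarith)
        have hprod := mul_le_mul hcoef hL2 (sq_nonneg _) (by nlinarith)
        have hscale := mul_le_mul_of_nonneg_left hprod (by positivity : (0 : ℝ) ≤ 12 * μ)
        rw [← mul_div_assoc, div_mul_eq_mul_div, div_div, div_le_div_iff₀ (by positivity) (by positivity)]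
        nlinarith [hscale]
      · -- target ≤ (1 + α(t-2)/2) μ / (4 L_t²)
        have hαt2 : (0 : ℝ) ≤ α * ((t : ℝ) - 2) := mul_nonneg hα0.le (by linarith)
        rw [div_le_div_iff₀ (by positivity) (by positivity)]
        nlinarith [mul_nonneg (mul_nonneg hαt2 hμ.le) (sq_nonneg (Lhat t))]
  intro t ht
  rcases eq_or_lt_of_le ht with h | h
  · subst h
    rw [hη2]
    have hL := hLpos 1
    norm_num
    rw [div_le_div_iff₀ (by positivity) (by positivity)]
    nlinarith [sq_nonneg (Lhat 1), mul_pos hμ (pow_pos (hLpos 1) 2)]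
  · exact key t h
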